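/- arXiv:2405.07970 — 3 statements merged into one kernel-verified Lean document; each statement's English description precedes it below -/
import Mathlib

section
/- Let S be an element of the group generated by a finite set {S_a} of Pauli operators, each supported on a set of qubits of diameter at most w. For any region R of qubits, there exists S' in the same group such that the support of S' is contained in R⁺ (the w-neighborhood of R) and S·S' acts trivially on R (i.e., S restricted to R equals S' restricted to R). -/
/-! A generator of diameter at most `w` either vanishes on `R` or has its whole support within
distance `w` of `R`. Splitting the generators accordingly writes every `S` in the group as
`S' + K`, with `S'` generated by those of the second kind (hence supported in `R⁺`) and `K`
vanishing on `R`. -/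

open AddSubgroup

theorem AddSubgroup.closure_le_inf_sup_of_subset_union {G : Type*} [AddCommGroup G] {s : Set G}
    {H K : AddSubgroup G} (hs : s ⊆ (H : Set G) ∪ K) : closure s ≤ closure s ⊓ H ⊔ K :=
  (closure_le _).2 fun _ hx =>
    (hs hx).elim (fun hH => mem_sup_left ⟨subset_closure hx, hH⟩) (fun hK => mem_sup_right hK)

theorem mem_pi_compl_nbhd_or_mem_pi_bot {Q M : Type*} [PseudoMetricSpace Q] [AddGroup M]
    {g : Q → M} {w : ℝ} (hg : ∀ q q', g q ≠ 0 → g q' ≠ 0 → dist q q' ≤ w) (R : Set Q) :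
    g ∈ pi {q | ∃ r ∈ R, dist q r ≤ w}ᶜ (fun _ => ⊥) ∨ g ∈ pi R (fun _ => ⊥) := by
  simp only [mem_pi, mem_bot]
  by_cases h : ∃ r ∈ R, g r ≠ 0
  · obtain ⟨r, hr, hgr⟩ := h
    exact Or.inl fun q hq => by_contra fun hgq => hq ⟨r, hr, hg q r hgq hgr⟩
  · exact Or.inr fun r hr => not_not.1 fun hgr => h ⟨r, hr, hgr⟩

theorem stabilizer_truncation_general {Q : Type*} [MetricSpace Q]
    {A : Type*} (gen : A → Q → ZMod 2 × ZMod 2) (w : ℝ)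
    (hdiam : ∀ a : A, ∀ q ∈ {q | gen a q ≠ 0}, ∀ q' ∈ {q | gen a q ≠ 0}, dist q q' ≤ w)
    (S : Q → ZMod 2 × ZMod 2)
    (hS : S ∈ AddSubgroup.closure (Set.range gen))
    (R : Set Q) :
    ∃ S' ∈ AddSubgroup.closure (Set.range gen),
      {q | S' q ≠ 0} ⊆ {q | ∃ r ∈ R, dist q r ≤ w} ∧ ∀ q ∈ R, S q = S' q := by
  have hsplit : Set.range gen ⊆
      ((pi {q | ∃ r ∈ R, dist q r ≤ w}ᶜ fun _ => ⊥ : AddSubgroup (Q → ZMod 2 × ZMod 2)) : Set _) ∪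
        (pi R fun _ => ⊥ : AddSubgroup (Q → ZMod 2 × ZMod 2)) := by
    rintro _ ⟨a, rfl⟩
    exact mem_pi_compl_nbhd_or_mem_pi_bot (fun q q' hq hq' => hdiam a q hq q' hq') R
  obtain ⟨S', ⟨hS'gen, hS'supp⟩, K, hK, rfl⟩ :=
    mem_sup.1 (closure_le_inf_sup_of_subset_union hsplit hS)
  refine ⟨S', hS'gen, fun q hq => by_contra fun hqR => hq (hS'supp q hqR), fun q hq => ?_⟩
  rw [Pi.add_apply, mem_bot.1 ((mem_pi _).1 hK q hq), add_zero]

/-- Truncation of stabilizer operators (Paulis modulo phase, in symplectic representation):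
for any S in the group generated by generators of diameter ≤ w and any region R, there is an
S' in the group supported in the w-neighborhood R⁺ of R that agrees with S on R. -/
theorem stabilizer_truncation {Q : Type*} [Fintype Q] [MetricSpace Q]
    {A : Type*} (gen : A → Q → ZMod 2 × ZMod 2) (w : ℝ)
    (hdiam : ∀ a : A, ∀ q ∈ {q | gen a q ≠ 0}, ∀ q' ∈ {q | gen a q ≠ 0}, dist q q' ≤ w)
    (S : Q → ZMod 2 × ZMod 2)
    (hS : S ∈ AddSubgroup.closure (Set.range gen))
    (R : Set Q) :
    ∃ S' ∈ AddSubgroup.closure (Set.range gen),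
      {q | S' q ≠ 0} ⊆ {q | ∃ r ∈ R, dist q r ≤ w} ∧ ∀ q ∈ R, S q = S' q :=
  stabilizer_truncation_general gen w hdiam S hS R
end

section
/- Let |ψ_{BD}⟩ ∈ H_B ⊗ H_D, |ψ_{AC}⟩ ∈ H_A ⊗ H_C, |ψ_{AD}⟩ ∈ H_A ⊗ H_D, |ψ_{BC}⟩ ∈ H_B ⊗ H_C be unit vectors such that, as vectors in H_A ⊗ H_B ⊗ H_C ⊗ H_D, |ψ_{AC}⟩ ⊗ |ψ_{BD}⟩ = |ψ_{AD}⟩ ⊗ |ψ_{BC}⟩. Then there exist unit vectors |ψ_A⟩, |ψ_B⟩, |ψ_C⟩, |ψ_D⟩ such that |ψ_{AC}⟩ = |ψ_A⟩ ⊗ |ψ_C⟩ and |ψ_{BD}⟩ = |ψ_B⟩ ⊗ |ψ_D⟩ up to phases. -/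
/-!
Fixing indices `b₀, d₀` with `ψBD (b₀, d₀) ≠ 0` in the cross identity gives
`ψAC (x₁, x₃) = (ψAD (x₁, d₀) / ψBD (b₀, d₀)) * ψBC (b₀, x₃)`, so `ψAC` is a product vector, and
symmetrically so is `ψBD`. The norm of a product vector is the product of the norms of its
factors, so rescaling the factors by reciprocal positive reals makes both of them unit vectors.
-/

open Matrix

open scoped ComplexOrder

section

variable {ι κ : Type*} [Fintype ι] [Fintype κ]

theorem star_dotProduct_self_of_eq_mul {R : Type*} [CommSemiring R] [StarRing R]
    {ψ : ι × κ → R} {f : ι → R} {g : κ → R} (hψ : ∀ i k, ψ (i, k) = f i * g k) :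
    star ψ ⬝ᵥ ψ = (star f ⬝ᵥ f) * (star g ⬝ᵥ g) := by
  simp only [dotProduct, Fintype.sum_prod_type, Finset.sum_mul_sum, Pi.star_apply, hψ,
    star_mul']
  exact Fintype.sum_congr _ _ fun i => Fintype.sum_congr _ _ fun k => by ring

theorem star_dotProduct_smul_self {𝕜 : Type*} [RCLike 𝕜] (r : ℝ) (f : ι → 𝕜) :
    star ((r : 𝕜) • f) ⬝ᵥ ((r : 𝕜) • f) = (r : 𝕜) ^ 2 * (star f ⬝ᵥ f) := by
  rw [star_smul, smul_dotProduct, dotProduct_smul, smul_eq_mul, smul_eq_mul,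
    RCLike.star_def, RCLike.conj_ofReal, ← mul_assoc, sq]

theorem exists_unit_rescale_of_dotProduct_mul_eq_one {𝕜 : Type*} [RCLike 𝕜]
    {f : ι → 𝕜} {g : κ → 𝕜} (h : (star f ⬝ᵥ f) * (star g ⬝ᵥ g) = 1) :
    ∃ (u : ι → 𝕜) (v : κ → 𝕜), star u ⬝ᵥ u = 1 ∧ star v ⬝ᵥ v = 1 ∧
      ∀ i k, u i * v k = f i * g k := by
  have hf : f ≠ 0 := by rintro rfl; simp at h
  obtain ⟨x, hx, hxf⟩ := RCLike.pos_iff_exists_ofReal.mp (dotProduct_star_self_pos_iff.mpr hf)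
  have hr : (√x : 𝕜) ^ 2 = star f ⬝ᵥ f := by rw [← RCLike.ofReal_pow, Real.sq_sqrt hx.le, hxf]
  have hr0 : (√x : 𝕜) ≠ 0 := by exact_mod_cast (Real.sqrt_pos.mpr hx).ne'
  refine ⟨(((√x)⁻¹ : ℝ) : 𝕜) • f, (√x : 𝕜) • g, ?_, ?_, fun i k => ?_⟩
  · rw [star_dotProduct_smul_self, RCLike.ofReal_inv, inv_pow, hr,
      inv_mul_cancel₀ (hr ▸ pow_ne_zero 2 hr0)]
  · rw [star_dotProduct_smul_self, hr, h]
  · simp only [Pi.smul_apply, smul_eq_mul, RCLike.ofReal_inv]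
    field_simp

theorem exists_unit_factors_of_eq_mul {𝕜 : Type*} [RCLike 𝕜] {ψ : ι × κ → 𝕜}
    (hψ : star ψ ⬝ᵥ ψ = 1) (f : ι → 𝕜) (g : κ → 𝕜) (hfg : ∀ i k, ψ (i, k) = f i * g k) :
    ∃ (u : ι → 𝕜) (v : κ → 𝕜), star u ⬝ᵥ u = 1 ∧ star v ⬝ᵥ v = 1 ∧
      ∀ i k, ψ (i, k) = u i * v k := by
  obtain ⟨u, v, hu, hv, huv⟩ :=
    exists_unit_rescale_of_dotProduct_mul_eq_one (star_dotProduct_self_of_eq_mul hfg ▸ hψ)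
  exact ⟨u, v, hu, hv, fun i k => by rw [huv, hfg]⟩

end

theorem exists_eq_mul_of_mul_eq_mul {ι κ μ ν K : Type*} [Field K]
    {x : ι × κ → K} {y : μ × ν → K} {z : ι × ν → K} {w : μ × κ → K}
    (h : ∀ i m k n, x (i, k) * y (m, n) = z (i, n) * w (m, k)) (hy : y ≠ 0) :
    ∃ (f : ι → K) (g : κ → K), ∀ i k, x (i, k) = f i * g k := by
  obtain ⟨⟨m, n⟩, hmn⟩ := Function.ne_iff.mp hy
  refine ⟨fun i => z (i, n) / y (m, n), fun k => w (m, k), fun i k => ?_⟩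
  rw [div_mul_eq_mul_div, eq_div_iff hmn, h]

theorem cross_factorization_general {a b c d : ℕ}
    (ψAC : Fin a × Fin c → ℂ) (ψBD : Fin b × Fin d → ℂ)
    (ψAD : Fin a × Fin d → ℂ) (ψBC : Fin b × Fin c → ℂ)
    (hAC : star ψAC ⬝ᵥ ψAC = 1) (hBD : star ψBD ⬝ᵥ ψBD = 1)
    (heq : ∀ (x₁ : Fin a) (x₂ : Fin b) (x₃ : Fin c) (x₄ : Fin d),
      ψAC (x₁, x₃) * ψBD (x₂, x₄) = ψAD (x₁, x₄) * ψBC (x₂, x₃)) :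
    ∃ (ψA : Fin a → ℂ) (ψB : Fin b → ℂ) (ψC : Fin c → ℂ) (ψD : Fin d → ℂ),
      star ψA ⬝ᵥ ψA = 1 ∧ star ψB ⬝ᵥ ψB = 1 ∧ star ψC ⬝ᵥ ψC = 1 ∧ star ψD ⬝ᵥ ψD = 1 ∧
      (∀ x₁ x₃ y₁ y₃, ψAC (x₁, x₃) * star (ψAC (y₁, y₃)) =
        (ψA x₁ * ψC x₃) * star (ψA y₁ * ψC y₃)) ∧
      (∀ x₂ x₄ y₂ y₄, ψBD (x₂, x₄) * star (ψBD (y₂, y₄)) =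
        (ψB x₂ * ψD x₄) * star (ψB y₂ * ψD y₄)) := by
  have hAC0 : ψAC ≠ 0 := by rintro rfl; simp at hAC
  have hBD0 : ψBD ≠ 0 := by rintro rfl; simp at hBD
  obtain ⟨fA, fC, hACf⟩ := exists_eq_mul_of_mul_eq_mul heq hBD0
  obtain ⟨fB, fD, hBDf⟩ := exists_eq_mul_of_mul_eq_mul
    (fun x₂ x₁ x₄ x₃ => by rw [mul_comm, heq, mul_comm]) hAC0
  obtain ⟨ψA, ψC, hA, hC, hACuv⟩ := exists_unit_factors_of_eq_mul hAC fA fC hACf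
  obtain ⟨ψB, ψD, hB, hD, hBDuv⟩ := exists_unit_factors_of_eq_mul hBD fB fD hBDf
  exact ⟨ψA, ψB, ψC, ψD, hA, hB, hC, hD,
    fun _ _ _ _ => by rw [hACuv, hACuv], fun _ _ _ _ => by rw [hBDuv, hBDuv]⟩

/-- If |ψ_AC⟩ ⊗ |ψ_BD⟩ = |ψ_AD⟩ ⊗ |ψ_BC⟩ as vectors on A⊗B⊗C⊗D, then ψ_AC and ψ_BD
factorize into single-party unit vectors, up to phases (equality of rank-one projectors). -/
theorem cross_factorization {a b c d : ℕ}
    (ψAC : Fin a × Fin c → ℂ) (ψBD : Fin b × Fin d → ℂ)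
    (ψAD : Fin a × Fin d → ℂ) (ψBC : Fin b × Fin c → ℂ)
    (hAC : star ψAC ⬝ᵥ ψAC = 1) (hBD : star ψBD ⬝ᵥ ψBD = 1)
    (hAD : star ψAD ⬝ᵥ ψAD = 1) (hBC : star ψBC ⬝ᵥ ψBC = 1)
    (heq : ∀ (x₁ : Fin a) (x₂ : Fin b) (x₃ : Fin c) (x₄ : Fin d),
      ψAC (x₁, x₃) * ψBD (x₂, x₄) = ψAD (x₁, x₄) * ψBC (x₂, x₃)) :
    ∃ (ψA : Fin a → ℂ) (ψB : Fin b → ℂ) (ψC : Fin c → ℂ) (ψD : Fin d → ℂ),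
      star ψA ⬝ᵥ ψA = 1 ∧ star ψB ⬝ᵥ ψB = 1 ∧ star ψC ⬝ᵥ ψC = 1 ∧ star ψD ⬝ᵥ ψD = 1 ∧
      (∀ x₁ x₃ y₁ y₃, ψAC (x₁, x₃) * star (ψAC (y₁, y₃)) =
        (ψA x₁ * ψC x₃) * star (ψA y₁ * ψC y₃)) ∧
      (∀ x₂ x₄ y₂ y₄, ψBD (x₂, x₄) * star (ψBD (y₂, y₄)) =
        (ψB x₂ * ψD x₄) * star (ψB y₂ * ψD y₄)) :=
  cross_factorization_general ψAC ψBD ψAD ψBC hAC hBD heq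
end

section
/- The n-qubit GHZ state |GHZ⟩ = (|0⟩^⊗n + |1⟩^⊗n)/√2 satisfies max over product states |P⟩ = ⊗ⱼ|pⱼ⟩ of |⟨GHZ|P⟩|² = 1/2; hence its geometric entanglement measure is E₀(GHZ) = 1. -/
open Matrix

/-- The n-qubit GHZ state as a function on computational basis configurations. -/
noncomputable def GHZ (n : ℕ) : (Fin n → Fin 2) → ℂ :=
  fun v => if v = (fun _ => 0) then (1 / Real.sqrt 2 : ℝ) else
    if v = (fun _ => 1) then (1 / Real.sqrt 2 : ℝ) else 0

/-!
Only the configurations `0⋯0` and `1⋯1` contribute to the overlap, which is therefore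
`(∏ⱼ pⱼ(0) + ∏ⱼ pⱼ(1)) / √2`. With `aⱼ = |pⱼ(0)|`, `bⱼ = |pⱼ(1)|` in `[0, 1]` and
`aⱼ² + bⱼ² = 1`, each product is at most its factors at two distinct sites `i ≠ k`, and
`aᵢaₖ + bᵢbₖ ≤ (aᵢ² + aₖ² + bᵢ² + bₖ²) / 2 = 1`. The bound `1/2` is attained by `|0⋯0⟩`.
-/

open Finset

lemma prod_le_mul_of_le_one {ι : Type*} [Fintype ι] {c : ι → ℝ} {i k : ι} (hik : i ≠ k)
    (h0 : ∀ j, 0 ≤ c j) (h1 : ∀ j, c j ≤ 1) : ∏ j, c j ≤ c i * c k := by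
  classical
  rw [← prod_pair hik]
  exact prod_le_prod_of_subset_of_le_one (subset_univ _) (fun j _ ↦ h0 j) (fun j _ _ ↦ h1 j)

lemma prod_add_prod_le_one {ι : Type*} [Fintype ι] [Nontrivial ι] {a b : ι → ℝ}
    (ha : ∀ j, 0 ≤ a j) (hb : ∀ j, 0 ≤ b j) (hab : ∀ j, a j ^ 2 + b j ^ 2 = 1) :
    ∏ j, a j + ∏ j, b j ≤ 1 := by
  obtain ⟨i, k, hik⟩ := exists_pair_ne ι
  have ha1 j : a j ≤ 1 := by nlinarith [hab j, hb j]
  have hb1 j : b j ≤ 1 := by nlinarith [hab j, ha j]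
  calc ∏ j, a j + ∏ j, b j ≤ a i * a k + b i * b k :=
        add_le_add (prod_le_mul_of_le_one hik ha ha1) (prod_le_mul_of_le_one hik hb hb1)
    _ ≤ ((a i ^ 2 + b i ^ 2) + (a k ^ 2 + b k ^ 2)) / 2 := by
        nlinarith [sq_nonneg (a i - a k), sq_nonneg (b i - b k)]
    _ = 1 := by rw [hab, hab]; norm_num

lemma star_dotProduct_self_eq_sum_norm_sq {ι : Type*} [Fintype ι] (v : ι → ℂ) :
    star v ⬝ᵥ v = ((∑ i, ‖v i‖ ^ 2 : ℝ) : ℂ) := by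
  simp [dotProduct, Complex.conj_mul']

lemma norm_prod_add_prod_le_one {ι : Type*} [Fintype ι] [Nontrivial ι] {p : ι → Fin 2 → ℂ}
    (hp : ∀ j, star (p j) ⬝ᵥ p j = 1) : ‖∏ j, p j 0 + ∏ j, p j 1‖ ≤ 1 := by
  have hunit j : ‖p j 0‖ ^ 2 + ‖p j 1‖ ^ 2 = 1 := by
    have := hp j
    rw [star_dotProduct_self_eq_sum_norm_sq, Fin.sum_univ_two] at this
    exact_mod_cast this
  calc ‖∏ j, p j 0 + ∏ j, p j 1‖ ≤ ∏ j, ‖p j 0‖ + ∏ j, ‖p j 1‖ := by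
        rw [← norm_prod, ← norm_prod]; exact norm_add_le _ _
    _ ≤ 1 := prod_add_prod_le_one (fun _ ↦ norm_nonneg _) (fun _ ↦ norm_nonneg _) hunit

lemma GHZ_overlap_eq {n : ℕ} (hn : n ≠ 0) (p : Fin n → Fin 2 → ℂ) :
    ∑ v : Fin n → Fin 2, (starRingEnd ℂ) (GHZ n v) * ∏ j, p j (v j)
      = (∏ j, p j 0 + ∏ j, p j 1) / Real.sqrt 2 := by
  have hne : (fun _ : Fin n ↦ (0 : Fin 2)) ≠ fun _ ↦ 1 := fun h ↦
    absurd (congrFun h ⟨0, Nat.pos_of_ne_zero hn⟩) (by decide)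
  rw [sum_eq_add _ _ hne (fun v _ hv ↦ by simp [GHZ, hv.1, hv.2]) (by simp) (by simp)]
  simp only [GHZ, ↓reduceIte, hne.symm, one_div, Complex.ofReal_inv, map_inv₀,
    Complex.conj_ofReal]
  ring

lemma normSq_GHZ_overlap {n : ℕ} (hn : n ≠ 0) (p : Fin n → Fin 2 → ℂ) :
    Complex.normSq (∑ v : Fin n → Fin 2, (starRingEnd ℂ) (GHZ n v) * ∏ j, p j (v j))
      = ‖∏ j, p j 0 + ∏ j, p j 1‖ ^ 2 / 2 := by
  rw [GHZ_overlap_eq hn, ← Complex.sq_norm, norm_div, div_pow, Complex.norm_real,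
    Real.norm_of_nonneg (Real.sqrt_nonneg 2), Real.sq_sqrt zero_le_two]

/-- For n ≥ 2, the maximal squared overlap of the GHZ state with product states is 1/2;
hence its geometric entanglement measure is E₀(GHZ) = −log₂(1/2) = 1. -/
theorem GHZ_max_product_overlap (n : ℕ) (hn : 2 ≤ n) :
    IsGreatest
      {x : ℝ | ∃ p : Fin n → Fin 2 → ℂ, (∀ j, star (p j) ⬝ᵥ p j = 1) ∧
        x = Complex.normSq (∑ v : Fin n → Fin 2,
          (starRingEnd ℂ) (GHZ n v) * ∏ j, p j (v j))}
      (1 / 2) ∧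
    -Real.logb 2 (1 / 2) = 1 := by
  have hn0 : n ≠ 0 := by omega
  have : Nontrivial (Fin n) := Fin.nontrivial_iff_two_le.mpr hn
  refine ⟨⟨⟨fun _ ↦ Pi.single 0 1, fun _ ↦ ?_, ?_⟩, ?_⟩, ?_⟩
  · simp [dotProduct, Fin.sum_univ_two]
  · simp [normSq_GHZ_overlap hn0, zero_pow hn0]
  · rintro _ ⟨p, hp, rfl⟩
    rw [normSq_GHZ_overlap hn0]
    gcongr
    exact pow_le_one₀ (norm_nonneg _) (norm_prod_add_prod_le_one hp)
  · rw [one_div, Real.logb_inv, Real.logb_self_eq_one one_lt_two, neg_neg]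
end
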